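/- arXiv:1412.2657 — 2 statements merged into one kernel-verified Lean document; each statement's English description precedes it below -/
import Mathlib

section
/- Let R satisfy (H1) and let (y^{(a)}, z^{(a)}) solve SP({a+Σu_n}, R). Define h_n^{(a)} ∈ ℝ₊ᵈ by (h_n^{(a)})_i = max over 1 ≤ k ≤ n of max(0, −((a)_i + Σ_{ℓ=1}^k (u_ℓ)_i)). Then y_n^{(a)} ≤ R⁻¹ h_n^{(a)} componentwise for all n ≥ 1. -/
/-!
Telescoping the Skorokhod recursion gives `z n = a + ∑ u + R *ᵥ y n` with `R = 1 - Pᵀ`, and one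
shows `R *ᵥ y n ≤ h n` coordinatewise by induction on `n`. If `y · i` increases at step `n`,
complementarity forces `z n i = 0`, so `(R *ᵥ y n) i = -(a i + ∑ u · i)`; otherwise `y n i` is
unchanged while `Pᵀ *ᵥ y n` can only have grown, so `(R *ᵥ y n) i = y n i - (Pᵀ *ᵥ y n) i` did not
increase. It remains that `R⁻¹` is entrywise nonnegative. For `t ∈ [0, 1]` the matrix `1 - t • Pᵀ`
is invertible, as `P` has no real eigenvalue `1 / t ≥ 1`; its inverse is nonnegative at `t = 0`, and
nonnegativity propagates along `[0, 1]` in steps so short (by a uniform bound on the inverses) that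
each step multiplies by a convergent Neumann series of nonnegative matrices.
-/

open Matrix Finset MeasureTheory ProbabilityTheory

noncomputable section

/-- A pair `(ξ, ζ)` solves the linear complementarity problem `LCP(η, M)`. -/
def IsLCPSol {d : ℕ} (M : Matrix (Fin d) (Fin d) ℝ) (η ξ ζ : Fin d → ℝ) : Prop :=
  ζ = η + M *ᵥ ξ ∧ (∀ i, 0 ≤ ξ i) ∧ (∀ i, 0 ≤ ζ i) ∧ ξ ⬝ᵥ ζ = 0

/-- `(y, z)` solves the Skorokhod problem `SP({a + Σ u_n}, M)` in the orthant. -/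
def IsSPSol {d : ℕ} (M : Matrix (Fin d) (Fin d) ℝ) (a : Fin d → ℝ)
    (u y z : ℕ → Fin d → ℝ) : Prop :=
  y 0 = 0 ∧ z 0 = a ∧
  ∀ n, 1 ≤ n →
    z n = z (n - 1) + u n + M *ᵥ (y n - y (n - 1)) ∧
    (∀ i, 0 ≤ z n i) ∧ (∀ i, 0 ≤ y n i - y (n - 1) i) ∧
    z n ⬝ᵥ (y n - y (n - 1)) = 0

lemma isUnit_one_sub_smul_of_spectralRadius_lt_one {𝕜 A : Type*} [NontriviallyNormedField 𝕜]
    [NormedRing A] [NormedAlgebra 𝕜 A] {a : A} (ha : spectralRadius 𝕜 a < 1) {t : 𝕜}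
    (ht : ‖t‖ ≤ 1) : IsUnit (1 - t • a) :=
  spectrum.isUnit_one_sub_smul_of_lt_inv_radius <|
    (ENNReal.coe_le_one_iff.mpr (by exact_mod_cast ht)).trans_lt (ENNReal.one_lt_inv.mpr ha)

namespace Matrix

variable {m n : Type*}

lemma nonneg_one [DecidableEq n] (i j : n) : (0 : ℝ) ≤ (1 : Matrix n n ℝ) i j := by
  by_cases h : i = j <;> simp [one_apply, h]

variable [Fintype n]

lemma mulVec_mono_of_nonneg {A : Matrix m n ℝ} (hA : ∀ i j, 0 ≤ A i j) {v w : n → ℝ}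
    (hvw : v ≤ w) : A *ᵥ v ≤ A *ᵥ w :=
  fun i => dotProduct_le_dotProduct_of_nonneg_left hvw (hA i)

lemma nonneg_mul {A B : Matrix n n ℝ} (hA : ∀ i j, 0 ≤ A i j) (hB : ∀ i j, 0 ≤ B i j)
    (i j : n) : 0 ≤ (A * B) i j :=
  Finset.sum_nonneg fun l _ => mul_nonneg (hA i l) (hB l j)

variable [DecidableEq n]

lemma nonneg_pow {A : Matrix n n ℝ} (hA : ∀ i j, 0 ≤ A i j) (k : ℕ) :
    ∀ i j, 0 ≤ (A ^ k) i j := by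
  induction k with
  | zero => simpa using nonneg_one
  | succ k ih => rw [pow_succ]; exact nonneg_mul ih hA

attribute [local instance] Matrix.linftyOpNormedRing Matrix.linftyOpNormedAlgebra

lemma nonneg_inv_one_sub_of_norm_lt_one {X : Matrix n n ℝ} (hX : ∀ i j, 0 ≤ X i j)
    (hXn : ‖X‖ < 1) (i j : n) : 0 ≤ (1 - X)⁻¹ i j := by
  have hsum : HasSum (fun k => X ^ k) (1 - X)⁻¹ := by
    rw [nonsing_inv_eq_ringInverse, ← geom_series_eq_inverse X hXn]
    exact (summable_geometric_of_norm_lt_one hXn).hasSum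
  exact (Pi.hasSum.mp (Pi.hasSum.mp hsum i) j).nonneg fun k => nonneg_pow hX k i j

lemma nonneg_inv_sub {A X : Matrix n n ℝ} (hA : IsUnit A) (hAinv : ∀ i j, 0 ≤ A⁻¹ i j)
    (hX : ∀ i j, 0 ≤ X i j) (hAX : ‖A⁻¹ * X‖ < 1) (i j : n) : 0 ≤ (A - X)⁻¹ i j := by
  have hfactor : A - X = A * (1 - A⁻¹ * X) := by
    rw [Matrix.mul_sub, Matrix.mul_one, ← Matrix.mul_assoc,
      mul_nonsing_inv A ((isUnit_iff_isUnit_det A).mp hA), Matrix.one_mul]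
  rw [hfactor, Matrix.mul_inv_rev]
  exact nonneg_mul (nonneg_inv_one_sub_of_norm_lt_one (nonneg_mul hAinv hX) hAX) hAinv i j

lemma nonneg_inv_one_sub_of_isUnit {Q : Matrix n n ℝ} (hQ : ∀ i j, 0 ≤ Q i j)
    (hunit : ∀ t ∈ Set.Icc (0 : ℝ) 1, IsUnit (1 - t • Q)) (i j : n) : 0 ≤ (1 - Q)⁻¹ i j := by
  have hcont : ContinuousOn (fun t : ℝ => (1 - t • Q)⁻¹) (Set.Icc 0 1) := fun t ht =>
    ((continuousAt_matrix_inv _ (by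
        rw [Ring.inverse_eq_inv']
        exact continuousAt_inv₀ ((isUnit_iff_isUnit_det _).mp (hunit t ht)).ne_zero)).comp
      (by fun_prop)).continuousWithinAt
  obtain ⟨C, hC⟩ := isCompact_Icc.exists_bound_of_continuousOn hcont
  obtain ⟨N, hN⟩ := exists_nat_gt (C * ‖Q‖)
  have hN0 : (0 : ℝ) < N :=
    lt_of_le_of_lt (mul_nonneg ((norm_nonneg _).trans (hC 0 (by simp))) (norm_nonneg Q)) hN
  have hstep : ∀ k ≤ N, ∀ i j, 0 ≤ (1 - ((k : ℝ) / N) • Q)⁻¹ i j := by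
    intro k
    induction k with
    | zero => simpa using nonneg_one
    | succ k ih =>
      intro hk
      have ht : (k : ℝ) / N ∈ Set.Icc (0 : ℝ) 1 :=
        ⟨by positivity, (div_le_one hN0).mpr (by exact_mod_cast (Nat.le_succ k).trans hk)⟩
      have hsmall : ‖(1 - ((k : ℝ) / N) • Q)⁻¹ * ((N : ℝ)⁻¹ • Q)‖ < 1 := by
        rw [mul_smul_comm, norm_smul, norm_inv, Real.norm_natCast, inv_mul_lt_iff₀ hN0, mul_one]
        calc _ ≤ ‖(1 - ((k : ℝ) / N) • Q)⁻¹‖ * ‖Q‖ := norm_mul_le _ _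
          _ ≤ C * ‖Q‖ := by gcongr; exact hC _ ht
          _ < N := hN
      have hsplit : 1 - (((k + 1 : ℕ) : ℝ) / N) • Q = 1 - ((k : ℝ) / N) • Q - (N : ℝ)⁻¹ • Q := by
        rw [sub_sub, ← add_smul]; push_cast; ring_nf
      rw [hsplit]
      exact nonneg_inv_sub (hunit _ ht) (ih (Nat.le_of_succ_le hk)) (fun i j => by
        simpa using mul_nonneg (inv_nonneg.mpr hN0.le) (hQ i j)) hsmall
  simpa [div_self hN0.ne'] using hstep N le_rfl i j

lemma isUnit_one_sub_smul_transpose {P : Matrix n n ℝ} (hspec : spectralRadius ℝ P < 1) {t : ℝ}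
    (ht : |t| ≤ 1) : IsUnit (1 - t • Pᵀ) := by
  rw [← transpose_smul, ← transpose_one, ← transpose_sub, isUnit_transpose]
  exact isUnit_one_sub_smul_of_spectralRadius_lt_one hspec ht

lemma nonneg_inv_one_sub_transpose {P : Matrix n n ℝ} (hP : ∀ i j, 0 ≤ P i j)
    (hspec : spectralRadius ℝ P < 1) (i j : n) : 0 ≤ (1 - Pᵀ)⁻¹ i j :=
  nonneg_inv_one_sub_of_isUnit (fun i j => hP j i)
    (fun _ ht => isUnit_one_sub_smul_transpose hspec (abs_le.mpr ⟨by linarith [ht.1], ht.2⟩)) i j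

end Matrix

namespace IsSPSol

variable {d : ℕ} {M : Matrix (Fin d) (Fin d) ℝ} {a : Fin d → ℝ} {u y z : ℕ → Fin d → ℝ}

lemma succ (h : IsSPSol M a u y z) (n : ℕ) :
    z (n + 1) = z n + u (n + 1) + M *ᵥ (y (n + 1) - y n) ∧ 0 ≤ z (n + 1) ∧
      y n ≤ y (n + 1) ∧ z (n + 1) ⬝ᵥ (y (n + 1) - y n) = 0 := by
  obtain ⟨hz, hz_nonneg, hy_le, hcompl⟩ := h.2.2 (n + 1) (Nat.le_add_left 1 n)
  simp only [add_tsub_cancel_right, sub_nonneg] at hz hy_le hcompl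
  exact ⟨hz, hz_nonneg, hy_le, hcompl⟩

lemma monotone_y (h : IsSPSol M a u y z) : Monotone y :=
  monotone_nat_of_le_succ fun n => (h.succ n).2.2.1

lemma z_eq (h : IsSPSol M a u y z) (n : ℕ) : z n = a + ∑ ℓ ∈ Icc 1 n, u ℓ + M *ᵥ y n := by
  induction n with
  | zero => simp [h.1, h.2.1]
  | succ n ih =>
    rw [(h.succ n).1, ih, sum_Icc_succ_top (Nat.le_add_left 1 n), mulVec_sub]
    abel

lemma z_apply_eq_zero_of_lt (h : IsSPSol M a u y z) {n : ℕ} {i : Fin d}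
    (hlt : y n i < y (n + 1) i) : z (n + 1) i = 0 := by
  obtain ⟨-, hz_nonneg, hy_le, hcompl⟩ := h.succ n
  have hterm := (sum_eq_zero_iff_of_nonneg fun l _ =>
    mul_nonneg (hz_nonneg l) (sub_nonneg.mpr (hy_le l))).mp hcompl i (mem_univ i)
  exact (mul_eq_zero.mp hterm).resolve_right (sub_pos.mpr hlt).ne'

lemma one_sub_mulVec_apply_le {Q : Matrix (Fin d) (Fin d) ℝ} (h : IsSPSol (1 - Q) a u y z)
    (hQ : ∀ i j, 0 ≤ Q i j) (i : Fin d) {c : ℝ} (hc : 0 ≤ c) :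
    ∀ n, (∀ k ∈ Icc 1 n, -(a i + ∑ ℓ ∈ Icc 1 k, u ℓ i) ≤ c) → ((1 - Q) *ᵥ y n) i ≤ c := by
  have hRy : ∀ m, ((1 - Q) *ᵥ y m) i = y m i - (Q *ᵥ y m) i := fun m => by
    rw [sub_mulVec, one_mulVec, Pi.sub_apply]
  intro n
  induction n with
  | zero => simpa [h.1] using hc
  | succ n ih =>
    intro hbound
    rcases (h.monotone_y n.le_succ i).lt_or_eq with hlt | heq
    · have hz := congrFun (h.z_eq (n + 1)) i
      rw [h.z_apply_eq_zero_of_lt hlt, Pi.add_apply, Pi.add_apply, Finset.sum_apply] at hz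
      linarith [hbound (n + 1) (right_mem_Icc.mpr (Nat.le_add_left 1 n))]
    · calc ((1 - Q) *ᵥ y (n + 1)) i ≤ ((1 - Q) *ᵥ y n) i := by
            rw [hRy, hRy, heq]
            linarith [mulVec_mono_of_nonneg hQ (h.monotone_y n.le_succ) i]
        _ ≤ c := ih fun k hk => hbound k (Icc_subset_Icc_right n.le_succ hk)

end IsSPSol

theorem stmt_6_general {d : ℕ} (P : Matrix (Fin d) (Fin d) ℝ)
    (hnonneg : ∀ i j, 0 ≤ P i j)
    (hspec : spectralRadius ℝ P < 1)
    (a : Fin d → ℝ) (u y z : ℕ → Fin d → ℝ)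
    (hSP : IsSPSol (1 - Pᵀ) a u y z) :
    ∀ n, (hn : 1 ≤ n) →
      y n ≤ (1 - Pᵀ)⁻¹ *ᵥ (fun i =>
        (Finset.Icc 1 n).sup' (Finset.nonempty_Icc.mpr hn)
          (fun k => max 0 (-(a i + ∑ ℓ ∈ Finset.Icc 1 k, u ℓ i)))) := by
  intro n hn
  have hR : IsUnit (1 - Pᵀ).det := by
    simpa using (isUnit_iff_isUnit_det _).mp (isUnit_one_sub_smul_transpose hspec abs_one.le)
  have hbound : (1 - Pᵀ) *ᵥ y n ≤ fun i => (Icc 1 n).sup' (nonempty_Icc.mpr hn)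
      (fun k => max 0 (-(a i + ∑ ℓ ∈ Icc 1 k, u ℓ i))) := fun i =>
    hSP.one_sub_mulVec_apply_le (fun i j => hnonneg j i) i
      (le_sup'_of_le _ (right_mem_Icc.mpr hn) (le_max_left _ _)) n
      fun k hk => le_sup'_of_le _ hk (le_max_right _ _)
  calc y n = (1 - Pᵀ)⁻¹ *ᵥ ((1 - Pᵀ) *ᵥ y n) := by
        rw [mulVec_mulVec, nonsing_inv_mul _ hR, one_mulVec]
    _ ≤ _ := mulVec_mono_of_nonneg (nonneg_inv_one_sub_transpose hnonneg hspec) hbound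

theorem stmt_6 {d : ℕ} (P : Matrix (Fin d) (Fin d) ℝ)
    (hdiag : ∀ i, P i i = 0) (hnonneg : ∀ i j, 0 ≤ P i j)
    (hspec : spectralRadius ℝ P < 1)
    (a : Fin d → ℝ) (ha : ∀ i, 0 ≤ a i) (u y z : ℕ → Fin d → ℝ)
    (hSP : IsSPSol (1 - Pᵀ) a u y z) :
    ∀ n, (hn : 1 ≤ n) →
      y n ≤ (1 - Pᵀ)⁻¹ *ᵥ (fun i =>
        (Finset.Icc 1 n).sup' (Finset.nonempty_Icc.mpr hn)
          (fun k => max 0 (-(a i + ∑ ℓ ∈ Finset.Icc 1 k, u ℓ i)))) :=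
  stmt_6_general P hnonneg hspec a u y z hSP
end
end

section
/- Let R satisfy (H1), fix n ≥ 1, u_1,…,u_n ∈ ℝᵈ, a ∈ ℝ₊ᵈ. Define the auxiliary LCP sequence: (Δξ_1^{(a)}, ζ_1^{(a)}) solving LCP(−R⁻¹a − R⁻¹u_1, R⁻¹) with ζ the regulated part and Δξ the pushing part, and (Δξ_k^{(a)}, ζ_k^{(a)}) solving LCP(−R⁻¹Δξ_{k−1}^{(a)} − R⁻¹u_k, R⁻¹) for 2 ≤ k ≤ n. Then Δξ_k^{(a)} = z_k^{(a)} and ζ_k^{(a)} = Δy_k^{(a)} for all 1 ≤ k ≤ n, where (y^{(a)}, z^{(a)}) solves SP({a+Σu_k}, R). -/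
open Matrix Finset MeasureTheory ProbabilityTheory

noncomputable section

/-!
Multiplying the auxiliary LCP by `R = 1 - Pᵀ` shows that `(ζ k, ξ k)` solves
`LCP(ξ (k-1) + u k, R)`, while step `k` of the Skorokhod problem says that `(y k - y (k-1), z k)` solves
`LCP(z (k-1) + u k, R)`; by induction on `k` everything reduces to uniqueness for `LCP(q, 1 - B)`
with `B ≥ 0` entrywise. A solution is a fixed point of `x ↦ (B x - q)⁺`, so the difference
`v = |x - x'|` of two solutions satisfies `0 ≤ v ≤ B v`, which forces `v = 0` once
`(1 - B)⁻¹ ≥ 0`. Since `μ - B` is invertible for every real `μ ≥ 1`, the resolvent `(μ - B)⁻¹` is a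
nonnegative Neumann series for `μ > ‖B‖`, and the resolvent identity propagates its nonnegativity
continuously down to `μ = 1`.
-/

namespace Matrix

variable {ι : Type*}

def EntrywiseNonneg (M : Matrix ι ι ℝ) : Prop := ∀ i j, 0 ≤ M i j

namespace EntrywiseNonneg

theorem one [DecidableEq ι] : (1 : Matrix ι ι ℝ).EntrywiseNonneg := fun i j => by
  rw [one_apply]; split_ifs <;> norm_num

theorem mul [Fintype ι] {M N : Matrix ι ι ℝ} (hM : M.EntrywiseNonneg) (hN : N.EntrywiseNonneg) :
    (M * N).EntrywiseNonneg := fun _ _ =>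
  Finset.sum_nonneg fun k _ => mul_nonneg (hM _ k) (hN k _)

theorem pow [Fintype ι] [DecidableEq ι] {M : Matrix ι ι ℝ} (hM : M.EntrywiseNonneg) (k : ℕ) :
    (M ^ k).EntrywiseNonneg := by
  induction k with
  | zero => exact pow_zero M ▸ one
  | succ k ih => exact pow_succ M k ▸ ih.mul hM

theorem smul {M : Matrix ι ι ℝ} (hM : M.EntrywiseNonneg) {c : ℝ} (hc : 0 ≤ c) :
    (c • M).EntrywiseNonneg := fun i j => mul_nonneg hc (hM i j)

theorem transpose {M : Matrix ι ι ℝ} (hM : M.EntrywiseNonneg) : Mᵀ.EntrywiseNonneg :=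
  fun i j => hM j i

theorem mulVec_nonneg [Fintype ι] {M : Matrix ι ι ℝ} (hM : M.EntrywiseNonneg) {v : ι → ℝ}
    (hv : 0 ≤ v) : 0 ≤ M *ᵥ v := fun _ =>
  Finset.sum_nonneg fun j _ => mul_nonneg (hM _ j) (hv j)

theorem abs_mulVec_le [Fintype ι] {M : Matrix ι ι ℝ} (hM : M.EntrywiseNonneg) (v : ι → ℝ) :
    |M *ᵥ v| ≤ M *ᵥ |v| := fun i =>
  calc |∑ j, M i j * v j| ≤ ∑ j, |M i j * v j| := Finset.abs_sum_le_sum_abs _ _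
    _ = ∑ j, M i j * |v j| := by simp_rw [abs_mul, abs_of_nonneg (hM i _)]

theorem isClosed_setOf : IsClosed {M : Matrix ι ι ℝ | M.EntrywiseNonneg} := by
  simp only [EntrywiseNonneg, Set.ofPred_forall]
  exact isClosed_iInter fun i => isClosed_iInter fun j =>
    isClosed_le continuous_const (continuous_id.matrix_elem i j)

end EntrywiseNonneg

section Resolvent

open scoped Matrix.Norms.Operator

variable [Fintype ι] [DecidableEq ι]

theorem EntrywiseNonneg.inv_one_sub {S : Matrix ι ι ℝ} (hS : S.EntrywiseNonneg) (h : ‖S‖ < 1) :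
    (1 - S)⁻¹.EntrywiseNonneg := fun i j => by
  rw [nonsing_inv_eq_ringInverse, ← geom_series_eq_inverse S h]
  exact (Pi.hasSum.mp (Pi.hasSum.mp (summable_geometric_of_norm_lt_one h).hasSum i) j).nonneg
    fun k => hS.pow k i j

theorem EntrywiseNonneg.inv_smul_one_sub {B : Matrix ι ι ℝ} (hB : B.EntrywiseNonneg) {μ : ℝ}
    (hμ : ‖B‖ < μ) : (μ • (1 : Matrix ι ι ℝ) - B)⁻¹.EntrywiseNonneg := by
  have hμ0 : 0 < μ := (norm_nonneg B).trans_lt hμ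
  have hfac : μ • (1 : Matrix ι ι ℝ) - B = (μ • 1) * (1 - μ⁻¹ • B) := by
    rw [mul_sub, mul_one, smul_mul_assoc, one_mul, smul_smul, mul_inv_cancel₀ hμ0.ne', one_smul]
  have hnorm : ‖μ⁻¹ • B‖ < 1 := by
    rw [norm_smul, Real.norm_of_nonneg (inv_nonneg.mpr hμ0.le), inv_mul_lt_iff₀ hμ0, mul_one]
    exact hμ
  rw [hfac, mul_inv_rev, inv_eq_left_inv (A := μ • (1 : Matrix ι ι ℝ)) (B := μ⁻¹ • 1) (by
    rw [smul_mul_smul_comm, inv_mul_cancel₀ hμ0.ne', mul_one, one_smul])]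
  have hμinv : 0 ≤ μ⁻¹ := inv_nonneg.mpr hμ0.le
  exact ((hB.smul hμinv).inv_one_sub hnorm).mul (one.smul hμinv)

theorem EntrywiseNonneg.inv_smul_one_sub_of_le {B : Matrix ι ι ℝ} {μ ν : ℝ}
    (hU : IsUnit (μ • (1 : Matrix ι ι ℝ) - B)) (hA : (μ • (1 : Matrix ι ι ℝ) - B)⁻¹.EntrywiseNonneg)
    (hνμ : ν ≤ μ) (hlt : (μ - ν) * ‖(μ • (1 : Matrix ι ι ℝ) - B)⁻¹‖ < 1) :
    (ν • (1 : Matrix ι ι ℝ) - B)⁻¹.EntrywiseNonneg := by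
  set X := μ • (1 : Matrix ι ι ℝ) - B
  have hfac : ν • (1 : Matrix ι ι ℝ) - B = X * (1 - (μ - ν) • X⁻¹) := by
    rw [mul_sub, mul_one, mul_smul_comm, mul_nonsing_inv X ((isUnit_iff_isUnit_det X).mp hU)]
    module
  have hnorm : ‖(μ - ν) • X⁻¹‖ < 1 := by
    rwa [norm_smul, Real.norm_of_nonneg (sub_nonneg.mpr hνμ)]
  rw [hfac, mul_inv_rev]
  exact ((hA.smul (sub_nonneg.mpr hνμ)).inv_one_sub hnorm).mul hA

theorem EntrywiseNonneg.inv_one_sub_of_forall_isUnit {B : Matrix ι ι ℝ} (hB : B.EntrywiseNonneg)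
    (hU : ∀ μ : ℝ, 1 ≤ μ → IsUnit (μ • (1 : Matrix ι ι ℝ) - B)) :
    (1 - B)⁻¹.EntrywiseNonneg := by
  let s := {μ : ℝ | (μ • (1 : Matrix ι ι ℝ) - B)⁻¹.EntrywiseNonneg}
  have hclosed : IsClosed (s ∩ Set.Icc 1 (‖B‖ + 1)) := by
    rw [Set.inter_comm]
    refine ContinuousOn.preimage_isClosed_of_isClosed (fun μ hμ => ?_) isClosed_Icc
      EntrywiseNonneg.isClosed_setOf
    obtain ⟨u, hu⟩ := (isUnit_iff_isUnit_det _).mp (hU μ hμ.1)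
    exact ((continuousAt_matrix_inv _ (hu ▸ NormedRing.inverse_continuousAt u)).comp
      (by fun_prop)).continuousWithinAt
  have hone : (1 : ℝ) ∈ s := by
    refine hclosed.mem_of_ge_of_forall_exists_lt (hB.inv_smul_one_sub (by linarith))
      (by linarith [norm_nonneg B]) fun μ ⟨hμs, hμ1, _⟩ => ?_
    set A := (μ • (1 : Matrix ι ι ℝ) - B)⁻¹
    set ε := (‖A‖ + 1)⁻¹
    have hε : 0 < ε := by positivity
    refine ⟨max 1 (μ - ε), hμs.inv_smul_one_sub_of_le (hU μ hμ1.le)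
      (max_le hμ1.le (by linarith)) ?_, le_max_left _ _, max_lt hμ1 (by linarith)⟩
    calc (μ - max 1 (μ - ε)) * ‖A‖
        ≤ ε * ‖A‖ := by gcongr; linarith [le_max_right 1 (μ - ε)]
      _ < 1 := by
        rw [inv_mul_lt_iff₀ (by positivity)]
        linarith
  simpa [s] using hone

end Resolvent

theorem eq_zero_of_le_mulVec [Fintype ι] [DecidableEq ι] {B : Matrix ι ι ℝ}
    (hinv : (1 - B)⁻¹.EntrywiseNonneg) (hU : IsUnit (1 - B)) {v : ι → ℝ} (hv : 0 ≤ v)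
    (hle : v ≤ B *ᵥ v) : v = 0 := by
  have hv_eq : v = -((1 - B)⁻¹ *ᵥ -((1 - B) *ᵥ v)) := by
    rw [mulVec_neg, neg_neg, mulVec_mulVec,
      nonsing_inv_mul _ ((isUnit_iff_isUnit_det _).mp hU), one_mulVec]
  have hneg : 0 ≤ -((1 - B) *ᵥ v) := by
    rw [sub_mulVec, one_mulVec, neg_nonneg, sub_nonpos]
    exact hle
  refine le_antisymm ?_ hv
  rw [hv_eq, neg_nonpos]
  exact hinv.mulVec_nonneg hneg

theorem isUnit_smul_one_sub_transpose_of_spectralRadius_lt_one [Fintype ι] [DecidableEq ι]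
    {P : Matrix ι ι ℝ} (hspec : spectralRadius ℝ P < 1) {μ : ℝ} (hμ : 1 ≤ μ) :
    IsUnit (μ • (1 : Matrix ι ι ℝ) - Pᵀ) := by
  have hres : μ ∈ resolventSet ℝ P := spectrum.mem_resolventSet_of_spectralRadius_lt <|
    hspec.trans_le (by exact_mod_cast (show (1 : ℝ) ≤ ‖μ‖ by
      rw [Real.norm_of_nonneg (by linarith)]; exact hμ))
  rw [← isUnit_transpose, transpose_sub, transpose_transpose, transpose_smul, transpose_one,
    ← Algebra.algebraMap_eq_smul_one]
  exact hres

end Matrix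

theorem eq_max_sub_of_mul_eq_zero {α : Type*} [Ring α] [LinearOrder α] [IsOrderedRing α]
    [NoZeroDivisors α] {a b : α} (ha : 0 ≤ a) (hb : 0 ≤ b) (hab : a * b = 0) :
    a = max (a - b) 0 := by
  rcases mul_eq_zero.mp hab with rfl | rfl
  · simp [hb]
  · simp [ha]

namespace IsLCPSol

variable {d : ℕ} {q x w : Fin d → ℝ}

theorem eq_max {B : Matrix (Fin d) (Fin d) ℝ} (h : IsLCPSol (1 - B) q x w) :
    x = (B *ᵥ x - q) ⊔ 0 := by
  obtain ⟨hw, hx, hw0, hxw⟩ := h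
  have hmul : ∀ i, x i * w i = 0 := fun i =>
    (Finset.sum_eq_zero_iff_of_nonneg fun j _ => mul_nonneg (hx j) (hw0 j)).mp hxw i
      (Finset.mem_univ i)
  have hsub : x - w = B *ᵥ x - q := by
    rw [hw, sub_mulVec, one_mulVec]
    abel
  ext i
  rw [← hsub]
  exact eq_max_sub_of_mul_eq_zero (hx i) (hw0 i) (hmul i)

theorem unique {B : Matrix (Fin d) (Fin d) ℝ} (hB : B.EntrywiseNonneg)
    (hU : ∀ μ : ℝ, 1 ≤ μ → IsUnit (μ • (1 : Matrix (Fin d) (Fin d) ℝ) - B))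
    {x' w' : Fin d → ℝ} (h : IsLCPSol (1 - B) q x w) (h' : IsLCPSol (1 - B) q x' w') :
    x = x' ∧ w = w' := by
  have hle : |x - x'| ≤ B *ᵥ |x - x'| :=
    calc |x - x'| = |(B *ᵥ x - q) ⊔ 0 - (B *ᵥ x' - q) ⊔ 0| := by rw [← h.eq_max, ← h'.eq_max]
      _ ≤ |(B *ᵥ x - q) - (B *ᵥ x' - q)| := abs_sup_sub_sup_le_abs _ _ _
      _ = |B *ᵥ (x - x')| := by rw [mulVec_sub, sub_sub_sub_cancel_right]
      _ ≤ B *ᵥ |x - x'| := hB.abs_mulVec_le _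
  have hx : x = x' := sub_eq_zero.mp <| (Pi.abs_eq_zero _).mp <|
    eq_zero_of_le_mulVec (hB.inv_one_sub_of_forall_isUnit hU) (by simpa using hU 1 le_rfl)
      (abs_nonneg _) hle
  exact ⟨hx, by rw [h.1, h'.1, hx]⟩

end IsLCPSol

theorem isLCPSol_inv_iff {d : ℕ} {R : Matrix (Fin d) (Fin d) ℝ} (hR : IsUnit R.det)
    {η ξ ζ : Fin d → ℝ} : IsLCPSol R⁻¹ (-(R⁻¹ *ᵥ η)) ξ ζ ↔ IsLCPSol R η ζ ξ := by
  have hsolve : ζ = -(R⁻¹ *ᵥ η) + R⁻¹ *ᵥ ξ ↔ ξ = η + R *ᵥ ζ := by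
    rw [neg_add_eq_sub, ← mulVec_sub]
    constructor
    · rintro rfl
      rw [mulVec_mulVec, mul_nonsing_inv _ hR, one_mulVec, add_sub_cancel]
    · rintro rfl
      rw [add_sub_cancel_left, mulVec_mulVec, nonsing_inv_mul _ hR, one_mulVec]
  rw [IsLCPSol, IsLCPSol, hsolve, dotProduct_comm]
  tauto

theorem IsSPSol.isLCPSol {d : ℕ} {M : Matrix (Fin d) (Fin d) ℝ} {a : Fin d → ℝ}
    {u y z : ℕ → Fin d → ℝ} (h : IsSPSol M a u y z) {k : ℕ} (hk : 1 ≤ k) :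
    IsLCPSol M (z (k - 1) + u k) (y k - y (k - 1)) (z k) := by
  obtain ⟨hz, hz0, hy0, hzy⟩ := h.2.2 k hk
  exact ⟨hz, hy0, hz0, by rw [dotProduct_comm, hzy]⟩

theorem stmt_10_general {d : ℕ} (P : Matrix (Fin d) (Fin d) ℝ)
    (hnonneg : ∀ i j, 0 ≤ P i j)
    (hspec : spectralRadius ℝ P < 1)
    (n : ℕ)
    (a : Fin d → ℝ) (u y z : ℕ → Fin d → ℝ)
    (hSP : IsSPSol (1 - Pᵀ) a u y z)
    (ξ ζ : ℕ → Fin d → ℝ)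
    (haux1 : IsLCPSol (1 - Pᵀ)⁻¹
      (-((1 - Pᵀ)⁻¹ *ᵥ a) - (1 - Pᵀ)⁻¹ *ᵥ u 1) (ξ 1) (ζ 1))
    (hauxk : ∀ k, 2 ≤ k → k ≤ n →
      IsLCPSol (1 - Pᵀ)⁻¹
        (-((1 - Pᵀ)⁻¹ *ᵥ ξ (k - 1)) - (1 - Pᵀ)⁻¹ *ᵥ u k) (ξ k) (ζ k)) :
    ∀ k, 1 ≤ k → k ≤ n → ξ k = z k ∧ ζ k = y k - y (k - 1) := by
  have hU := fun μ => isUnit_smul_one_sub_transpose_of_spectralRadius_lt_one (μ := μ) hspec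
  have hR : IsUnit (1 - Pᵀ).det := (isUnit_iff_isUnit_det _).mp (by simpa using hU 1 le_rfl)
  have hstep : ∀ k, 1 ≤ k → IsLCPSol (1 - Pᵀ) (z (k - 1) + u k) (ζ k) (ξ k) →
      ξ k = z k ∧ ζ k = y k - y (k - 1) := fun k hk h =>
    (h.unique (EntrywiseNonneg.transpose hnonneg) hU (hSP.isLCPSol hk)).symm
  intro k hk
  induction k, hk using Nat.le_induction with
  | base =>
    refine fun _ => hstep 1 le_rfl ?_
    rw [← isLCPSol_inv_iff hR, mulVec_add, neg_add', Nat.sub_self, hSP.2.1]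
    exact haux1
  | succ k hk ih =>
    refine fun hkn => hstep (k + 1) (by omega) ?_
    rw [← isLCPSol_inv_iff hR, mulVec_add, neg_add', Nat.add_sub_cancel, ← (ih (by omega)).1]
    exact hauxk (k + 1) (by omega) hkn

theorem stmt_10 {d : ℕ} (P : Matrix (Fin d) (Fin d) ℝ)
    (hdiag : ∀ i, P i i = 0) (hnonneg : ∀ i j, 0 ≤ P i j)
    (hspec : spectralRadius ℝ P < 1)
    (n : ℕ) (hn : 1 ≤ n)
    (a : Fin d → ℝ) (ha : ∀ i, 0 ≤ a i) (u y z : ℕ → Fin d → ℝ)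
    (hSP : IsSPSol (1 - Pᵀ) a u y z)
    (ξ ζ : ℕ → Fin d → ℝ)
    (haux1 : IsLCPSol (1 - Pᵀ)⁻¹
      (-((1 - Pᵀ)⁻¹ *ᵥ a) - (1 - Pᵀ)⁻¹ *ᵥ u 1) (ξ 1) (ζ 1))
    (hauxk : ∀ k, 2 ≤ k → k ≤ n →
      IsLCPSol (1 - Pᵀ)⁻¹
        (-((1 - Pᵀ)⁻¹ *ᵥ ξ (k - 1)) - (1 - Pᵀ)⁻¹ *ᵥ u k) (ξ k) (ζ k)) :
    ∀ k, 1 ≤ k → k ≤ n → ξ k = z k ∧ ζ k = y k - y (k - 1) :=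
  stmt_10_general P hnonneg hspec n a u y z hSP ξ ζ haux1 hauxk
end
end
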